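/- Let p be a strictly positive probability distribution on {0,1}^K, let o_1, o_2 be linear orders on the attributes, and let 𝒞_1 ∈ Seg(o_1), 𝒞_2 ∈ Seg(o_2) be collections with p ∈ M(𝒞_1) and p ∈ M(𝒞_2). Let (X_n)_{n≥1} be i.i.d. {0,1}^K-valued random variables with common law p, let D_N be the dataset of the first N samples, and define Z_N = N·(∑_{C ∈ 𝒞_1} H(C; D_N) − ∑_{S: S_i of 𝒞_1} H(S; D_N)) − N·(∑_{C ∈ 𝒞_2} H(C; D_N) − ∑_{S: S_i of 𝒞_2} H(S; D_N)). Then for every sequence of reals t_N with t_N → ∞, P(Z_N ≥ t_N) → 0 as N → ∞. -/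

import Mathlib

open Finset

/-- The marginal probability `p(X = v)`: the probability that the coordinates in `X`
agree with `v`. -/
noncomputable def marg {K : ℕ} (p : (Fin K → Bool) → ℝ) (X : Finset (Fin K))
    (v : Fin K → Bool) : ℝ :=
  ∑ t ∈ Finset.univ.filter (fun t : Fin K → Bool => ∀ i ∈ X, t i = v i), p t

/-- `p` is a probability distribution on `{0,1}^K`. -/
def IsDist {K : ℕ} (p : (Fin K → Bool) → ℝ) : Prop :=
  (∀ t, 0 ≤ p t) ∧ ∑ t : Fin K → Bool, p t = 1

/-- The empirical distribution of a dataset `D`. -/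
noncomputable def empDist {K : ℕ} (D : Multiset (Fin K → Bool)) : (Fin K → Bool) → ℝ :=
  fun v => (D.count v : ℝ) / (Multiset.card D : ℝ)

/-- The entropy (base 2) of the marginal of `p` on the attribute set `X`,
summing over representative vectors which are `false` outside of `X`. -/
noncomputable def segEntropy {K : ℕ} (p : (Fin K → Bool) → ℝ) (X : Finset (Fin K)) : ℝ :=
  -∑ v ∈ Finset.univ.filter (fun v : Fin K → Bool => ∀ i, i ∉ X → v i = false),
      marg p X v * Real.logb 2 (marg p X v)

/-- The item segment of the attributes at positions `a,…,b` in the order `o`. -/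
def segIv {K : ℕ} (o : Equiv.Perm (Fin K)) (a b : ℕ) : Finset (Fin K) :=
  (Finset.univ.filter (fun k : Fin K => a ≤ (k : ℕ) ∧ (k : ℕ) ≤ b)).image o

/-- A collection `𝒞 = {C_1, …, C_L} ∈ Seg(o)` of item segments covering all attributes,
forming an antichain, listed in the order of their first attribute.  The `i`-th segment
(for `0 ≤ i < L`) consists of the positions `s i, …, e i` in the order `o`. -/
structure SegColl (K : ℕ) where
  /-- number of segments -/
  L : ℕ
  hL : 0 < L
  /-- start position of each segment -/
  s : ℕ → ℕ
  /-- end position of each segment -/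
  e : ℕ → ℕ
  s_mono : ∀ i, i + 1 < L → s i < s (i + 1)
  e_mono : ∀ i, i + 1 < L → e i < e (i + 1)
  s_le_e : ∀ i, i < L → s i ≤ e i
  s_first : s 0 = 0
  e_last : e (L - 1) = K - 1
  e_lt : ∀ i, i < L → e i < K
  covers : ∀ i, i + 1 < L → s (i + 1) ≤ e i + 1

/-- The `i`-th item segment `C_{i+1}` of the collection, under the order `o`. -/
def SegColl.seg {K : ℕ} (𝒞 : SegColl K) (o : Equiv.Perm (Fin K)) (i : ℕ) : Finset (Fin K) :=
  segIv o (𝒞.s i) (𝒞.e i)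

/-- The intersection `S_i = C_i ∩ C_{i+1}` of consecutive segments. -/
def SegColl.ovl {K : ℕ} (𝒞 : SegColl K) (o : Equiv.Perm (Fin K)) (i : ℕ) : Finset (Fin K) :=
  𝒞.seg o i ∩ 𝒞.seg o (i + 1)

/-- Membership of a distribution `p` in the model `M(𝒞)`:
`p(A = t) ∏_{i=1}^{L-1} p(S_i = t) = ∏_{i=1}^{L} p(C_i = t)` for all `t`. -/
def memModel {K : ℕ} (o : Equiv.Perm (Fin K)) (𝒞 : SegColl K)
    (p : (Fin K → Bool) → ℝ) : Prop :=
  IsDist p ∧ ∀ t : Fin K → Bool,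
    p t * ∏ i ∈ Finset.range (𝒞.L - 1), marg p (𝒞.ovl o i) t
      = ∏ i ∈ Finset.range 𝒞.L, marg p (𝒞.seg o i) t

/-- The number of free parameters `df(𝒞)`. -/
def SegColl.df {K : ℕ} (𝒞 : SegColl K) (o : Equiv.Perm (Fin K)) : ℤ :=
  (∑ i ∈ Finset.range 𝒞.L, ((2 : ℤ) ^ (𝒞.seg o i).card - 1))
    - ∑ i ∈ Finset.range (𝒞.L - 1), ((2 : ℤ) ^ (𝒞.ovl o i).card - 1)

/-- The score of a single item segment `C`:
`score(C) = |D| H(C; D) + (log₂|D|/2)(2^{|C|} - 1)`. -/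
noncomputable def segScore {K : ℕ} (D : Multiset (Fin K → Bool)) (C : Finset (Fin K)) : ℝ :=
  (Multiset.card D : ℝ) * segEntropy (empDist D) C
    + Real.logb 2 (Multiset.card D) / 2 * ((2 : ℝ) ^ C.card - 1)

/-- The score of a collection: `score(𝒞) = ∑ score(C_i) - ∑ score(S_i)`. -/
noncomputable def collScore {K : ℕ} (D : Multiset (Fin K → Bool)) (o : Equiv.Perm (Fin K))
    (𝒞 : SegColl K) : ℝ :=
  ∑ i ∈ Finset.range 𝒞.L, segScore D (𝒞.seg o i)
    - ∑ i ∈ Finset.range (𝒞.L - 1), segScore D (𝒞.ovl o i)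

/-- The dataset consisting of the first `N` samples of the process `X`. -/
def sampleData {K : ℕ} {Ω : Type*} (X : ℕ → Ω → (Fin K → Bool)) (N : ℕ) (ω : Ω) :
    Multiset (Fin K → Bool) :=
  (Multiset.range N).map fun n => X n ω

/-- `∑_{C ∈ 𝒞} H(C; D) - ∑_i H(S_i; D)`, the entropy term of the collection `𝒞`. -/
noncomputable def collEnt {K : ℕ} (D : Multiset (Fin K → Bool)) (o : Equiv.Perm (Fin K))
    (𝒞 : SegColl K) : ℝ :=
  ∑ i ∈ Finset.range 𝒞.L, segEntropy (empDist D) (𝒞.seg o i)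
    - ∑ i ∈ Finset.range (𝒞.L - 1), segEntropy (empDist D) (𝒞.ovl o i)

open MeasureTheory Filter

/-!
Let `q` be the empirical distribution of `D_N`. Since `p ∈ M(𝒞₁)`, `log p` splits along the
segments and overlaps of `𝒞₁`, so the entropy term of `𝒞₁` at `q` is the cross entropy
`-∑ q log p` minus `∑ KL(q_C ‖ p_C) - ∑ KL(q_S ‖ p_S)`, which is nonnegative because marginal
divergences grow with the attribute set. For any collection `𝒞₂`, submodularity of entropy
applied along the prefixes `C₁ ∪ ⋯ ∪ Cⱼ` bounds its entropy term below by `H(q)`. Hence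
`Z_N ≤ N · KL(q ‖ p) ≤ N · χ²(q, p) / ln 2`, whose expectation is at most `2^K / ln 2` because
each empirical frequency `q_v` has variance at most `p_v / N`; Markov's inequality concludes.
-/

section Marginals

variable {K : ℕ}

/-- One representative for each value of the `X`-coordinates, as in the sum defining
`segEntropy`. -/
def cellReps (X : Finset (Fin K)) : Finset (Fin K → Bool) :=
  univ.filter fun v => ∀ i, i ∉ X → v i = false

def mask (X : Finset (Fin K)) (t : Fin K → Bool) : Fin K → Bool :=
  fun i => if i ∈ X then t i else false

variable {X A B : Finset (Fin K)} {p q : (Fin K → Bool) → ℝ} {t u v w : Fin K → Bool}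

lemma mem_cellReps : v ∈ cellReps X ↔ ∀ i ∉ X, v i = false := by
  simp [cellReps]

lemma mask_apply_of_mem {i : Fin K} (hi : i ∈ X) : mask X t i = t i := if_pos hi

lemma mask_mem_cellReps : mask X t ∈ cellReps X :=
  mem_cellReps.2 fun _ hi => if_neg hi

lemma mask_eq_iff (hv : v ∈ cellReps X) : mask X t = v ↔ ∀ i ∈ X, t i = v i := by
  refine ⟨fun h i hi => by rw [← h, mask_apply_of_mem hi], fun h => funext fun i => ?_⟩
  by_cases hi : i ∈ X
  · rw [mask_apply_of_mem hi, h i hi]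
  · rw [mem_cellReps.1 hv i hi, mask, if_neg hi]

lemma marg_congr (h : ∀ i ∈ X, u i = v i) : marg p X u = marg p X v := by
  refine sum_congr (filter_congr fun t _ => ?_) fun _ _ => rfl
  exact forall₂_congr fun i hi => by rw [h i hi]

lemma marg_mask (hXY : X ⊆ A) : marg p X (mask A t) = marg p X t :=
  marg_congr fun _ hi => mask_apply_of_mem (hXY hi)

lemma marg_nonneg (hp : ∀ t, 0 ≤ p t) : 0 ≤ marg p X v :=
  sum_nonneg fun t _ => hp t

lemma le_marg (hp : ∀ t, 0 ≤ p t) : p v ≤ marg p X v :=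
  single_le_sum (fun t _ => hp t) (by simp)

lemma marg_empty : marg p ∅ v = ∑ t, p t := by
  simp [marg]

lemma marg_univ : marg p univ v = p v := by
  rw [marg, filter_congr (q := (· = v)) fun t _ => by simp [funext_iff], filter_eq',
    if_pos (mem_univ v), sum_singleton]

lemma sum_cellReps_marg_mul (p : (Fin K → Bool) → ℝ) (X : Finset (Fin K))
    (f : (Fin K → Bool) → ℝ) :
    ∑ w ∈ cellReps X, marg p X w * f w = ∑ t, p t * f (mask X t) := by
  rw [← sum_fiberwise_of_maps_to (s := univ) (g := mask X) (t := cellReps X)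
    fun _ _ => mask_mem_cellReps]
  refine sum_congr rfl fun w hw => ?_
  rw [marg, sum_mul]
  refine sum_congr (filter_congr fun t _ => (mask_eq_iff hw).symm) fun t ht => ?_
  rw [(mem_filter.1 ht).2]

def glue (A B : Finset (Fin K)) (v t : Fin K → Bool) : Fin K → Bool :=
  fun i => if i ∈ A then v i else if i ∈ B then t i else false

lemma agree_iff_eq_glue (hv : v ∈ cellReps A) :
    (w ∈ cellReps (A ∪ B) ∧ mask A w = v) ∧ (∀ i ∈ B, t i = w i) ↔
      w = glue A B v t ∧ ∀ i ∈ A ∩ B, t i = v i := by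
  simp only [mask_eq_iff hv, mem_cellReps, mem_union, mem_inter]
  constructor
  · rintro ⟨⟨hw, hA⟩, hB⟩
    refine ⟨funext fun i => ?_, fun i hi => (hB i hi.2).trans (hA i hi.1)⟩
    simp only [glue]
    split_ifs with hiA hiB
    exacts [hA i hiA, (hB i hiB).symm, hw i (by tauto)]
  · rintro ⟨rfl, hAB⟩
    refine ⟨⟨fun i hi => ?_, fun i hi => if_pos hi⟩, fun i hi => ?_⟩
    · rw [glue, if_neg (by tauto), if_neg (by tauto)]
    · simp only [glue]
      split_ifs with hiA
      exacts [hAB i ⟨hiA, hi⟩, rfl]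

lemma sum_marg_fiber (hv : v ∈ cellReps A) :
    ∑ w ∈ (cellReps (A ∪ B)).filter (fun w => mask A w = v), marg p B w
      = marg p (A ∩ B) v := by
  unfold marg
  rw [sum_comm' (s' := fun t => {glue A B v t})
    (t' := univ.filter fun t => ∀ i ∈ A ∩ B, t i = v i) fun w t => by
    simpa only [mem_filter, mem_univ, true_and, mem_singleton] using agree_iff_eq_glue hv]
  simp only [sum_singleton]

end Marginals

section Entropy

variable {K : ℕ} {A B X : Finset (Fin K)} {p q : (Fin K → Bool) → ℝ}

noncomputable def crossEnt (q p : (Fin K → Bool) → ℝ) (X : Finset (Fin K)) : ℝ :=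
  -∑ t, q t * Real.logb 2 (marg p X t)

noncomputable def margKL (q p : (Fin K → Bool) → ℝ) (X : Finset (Fin K)) : ℝ :=
  crossEnt q p X - segEntropy q X

lemma segEntropy_eq_crossEnt (q : (Fin K → Bool) → ℝ) (X : Finset (Fin K)) :
    segEntropy q X = crossEnt q q X := by
  have h := sum_cellReps_marg_mul q X fun v => Real.logb 2 (marg q X v)
  simp only [marg_mask subset_rfl] at h
  exact congrArg Neg.neg h

lemma sum_cellReps_marg (p : (Fin K → Bool) → ℝ) (X : Finset (Fin K)) :
    ∑ w ∈ cellReps X, marg p X w = ∑ t, p t := by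
  simpa using sum_cellReps_marg_mul p X fun _ => 1

lemma sum_cellReps_union_le (hq : ∀ t, 0 ≤ q t) :
    ∑ w ∈ cellReps (A ∪ B), marg q A w * marg p B w / marg p (A ∩ B) w ≤ ∑ t, q t := by
  rw [← sum_cellReps_marg q A, ← sum_fiberwise_of_maps_to (g := mask A) (t := cellReps A)
    fun _ _ => mask_mem_cellReps]
  refine sum_le_sum fun v hv => ?_
  have hfib : ∀ w ∈ (cellReps (A ∪ B)).filter (fun w => mask A w = v),
      marg q A w * marg p B w / marg p (A ∩ B) w
        = marg q A v / marg p (A ∩ B) v * marg p B w := by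
    intro w hw
    have hwv := (mask_eq_iff hv).1 (mem_filter.1 hw).2
    rw [marg_congr hwv, marg_congr fun i hi => hwv i (mem_inter.1 hi).1]
    ring
  rw [sum_congr rfl hfib, ← mul_sum, sum_marg_fiber hv]
  rcases eq_or_ne (marg p (A ∩ B) v) 0 with h | h
  · simpa [h] using marg_nonneg hq
  · rw [div_mul_cancel₀ _ h]

lemma mul_logb_sub_logb_le {x a b : ℝ} (hx : 0 ≤ x) (ha : 0 < a) (hb : 0 < b) :
    x * (Real.logb 2 a - Real.logb 2 b) ≤ x * (a / b - 1) / Real.log 2 := by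
  rw [← Real.logb_div ha.ne' hb.ne', Real.logb, mul_div_assoc']
  gcongr
  exact Real.log_le_sub_one_of_pos (div_pos ha hb)

/-- The inequality behind both the submodularity of entropy and the monotonicity of
marginal divergences: it compares `q` on `A ∪ B` with the distribution glued from the
`A`-marginal of `q` and the conditional law of `B` given `A ∩ B` under `p`. -/
lemma sum_mul_logb_marg_le (hq : ∀ t, 0 ≤ q t) (hq1 : ∑ t, q t = 1) (hp : ∀ t, 0 ≤ p t)
    (hqp : ∀ t, 0 < q t → 0 < p t) :
    ∑ t, q t * (Real.logb 2 (marg q A t) + Real.logb 2 (marg p B t)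
        - Real.logb 2 (marg p (A ∩ B) t))
      ≤ ∑ t, q t * Real.logb 2 (marg q (A ∪ B) t) := by
  set g : (Fin K → Bool) → ℝ := fun t => marg q A t * marg p B t / marg p (A ∩ B) t
  have hpoint : ∀ t, q t * (Real.logb 2 (marg q A t) + Real.logb 2 (marg p B t)
        - Real.logb 2 (marg p (A ∩ B) t) - Real.logb 2 (marg q (A ∪ B) t))
      ≤ q t * (g t / marg q (A ∪ B) t - 1) / Real.log 2 := by
    intro t
    rcases (hq t).eq_or_lt with h0 | hqt
    · simp [← h0]
    have hmq : ∀ X, 0 < marg q X t := fun _ => hqt.trans_le (le_marg hq)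
    have hmp : ∀ X, 0 < marg p X t := fun _ => (hqp t hqt).trans_le (le_marg hp)
    have hnum := mul_pos (hmq A) (hmp B)
    rw [← Real.logb_mul (hmq A).ne' (hmp B).ne', ← Real.logb_div hnum.ne' (hmp _).ne']
    exact mul_logb_sub_logb_le (hq t) (div_pos hnum (hmp _)) (hmq _)
  have hsum : ∑ t, q t * (g t / marg q (A ∪ B) t) ≤ 1 := by
    have hAB : A ∩ B ⊆ A ∪ B := inter_subset_left.trans subset_union_left
    calc ∑ t, q t * (g t / marg q (A ∪ B) t)
        = ∑ w ∈ cellReps (A ∪ B), marg q (A ∪ B) w * (g w / marg q (A ∪ B) w) := by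
          simp only [sum_cellReps_marg_mul, g, marg_mask subset_union_left,
            marg_mask subset_union_right, marg_mask subset_rfl, marg_mask hAB]
      _ ≤ ∑ w ∈ cellReps (A ∪ B), g w := by
          refine sum_le_sum fun w _ => ?_
          rcases eq_or_ne (marg q (A ∪ B) w) 0 with h | h
          · simpa [h, g] using div_nonneg (mul_nonneg (marg_nonneg hq) (marg_nonneg hp))
              (marg_nonneg hp)
          · rw [mul_div_cancel₀ _ h]
      _ ≤ 1 := hq1 ▸ sum_cellReps_union_le hq
  have key : ∑ t, q t * (Real.logb 2 (marg q A t) + Real.logb 2 (marg p B t)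
        - Real.logb 2 (marg p (A ∩ B) t) - Real.logb 2 (marg q (A ∪ B) t)) ≤ 0 := by
    refine (sum_le_sum fun t _ => hpoint t).trans ?_
    rw [← sum_div]
    refine div_nonpos_of_nonpos_of_nonneg ?_ (Real.log_pos one_lt_two).le
    simp only [mul_sub_one, sum_sub_distrib, hq1]
    linarith
  simp only [mul_sub _ (_ - _), sum_sub_distrib] at key
  linarith

end Entropy

section Divergence

variable {K : ℕ} {A B X Y : Finset (Fin K)} {p q : (Fin K → Bool) → ℝ}

lemma segEntropy_union_add_inter_le (hq : ∀ t, 0 ≤ q t) (hq1 : ∑ t, q t = 1) :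
    segEntropy q (A ∪ B) + segEntropy q (A ∩ B) ≤ segEntropy q A + segEntropy q B := by
  have h := sum_mul_logb_marg_le (A := A) (B := B) hq hq1 hq fun _ => id
  simp only [segEntropy_eq_crossEnt, crossEnt, mul_sub, mul_add, sum_sub_distrib,
    sum_add_distrib] at h ⊢
  linarith

lemma margKL_mono (hq : ∀ t, 0 ≤ q t) (hq1 : ∑ t, q t = 1) (hp : ∀ t, 0 ≤ p t)
    (hqp : ∀ t, 0 < q t → 0 < p t) (hXY : X ⊆ Y) : margKL q p X ≤ margKL q p Y := by
  have h := sum_mul_logb_marg_le (A := X) (B := Y) hq hq1 hp hqp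
  rw [union_eq_right.2 hXY, inter_eq_left.2 hXY] at h
  simp only [margKL, segEntropy_eq_crossEnt, crossEnt, mul_sub, mul_add, sum_sub_distrib,
    sum_add_distrib] at h ⊢
  linarith

lemma margKL_empty (hq1 : ∑ t, q t = 1) (hp1 : ∑ t, p t = 1) : margKL q p ∅ = 0 := by
  simp [margKL, segEntropy_eq_crossEnt, crossEnt, marg_empty, hq1, hp1]

lemma margKL_nonneg (hq : ∀ t, 0 ≤ q t) (hq1 : ∑ t, q t = 1) (hp : ∀ t, 0 ≤ p t)
    (hp1 : ∑ t, p t = 1) (hqp : ∀ t, 0 < q t → 0 < p t) : 0 ≤ margKL q p X :=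
  margKL_empty hq1 hp1 ▸ margKL_mono hq hq1 hp hqp (empty_subset X)

noncomputable def chiSq (q p : (Fin K → Bool) → ℝ) : ℝ :=
  ∑ t, (q t - p t) ^ 2 / p t

lemma chiSq_nonneg (q : (Fin K → Bool) → ℝ) (hp : ∀ t, 0 ≤ p t) : 0 ≤ chiSq q p :=
  sum_nonneg fun t _ => div_nonneg (sq_nonneg _) (hp t)

lemma margKL_univ_le_chiSq (hq : ∀ t, 0 ≤ q t) (hq1 : ∑ t, q t = 1) (hp : ∀ t, 0 < p t)
    (hp1 : ∑ t, p t = 1) : margKL q p univ ≤ chiSq q p / Real.log 2 := by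
  have hpoint : ∀ t, q t * (Real.logb 2 (q t) - Real.logb 2 (p t))
      ≤ q t * (q t / p t - 1) / Real.log 2 := by
    intro t
    rcases (hq t).eq_or_lt with h0 | hqt
    · simp [← h0]
    exact mul_logb_sub_logb_le (hq t) hqt (hp t)
  have hchi : ∀ t, q t * (q t / p t - 1) = (q t - p t) ^ 2 / p t + (q t - p t) := by
    intro t
    field_simp [(hp t).ne']
    ring
  calc margKL q p univ = ∑ t, q t * (Real.logb 2 (q t) - Real.logb 2 (p t)) := by
        simp only [margKL, segEntropy_eq_crossEnt, crossEnt, marg_univ, mul_sub,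
          sum_sub_distrib]
        ring
    _ ≤ ∑ t, q t * (q t / p t - 1) / Real.log 2 := sum_le_sum fun t _ => hpoint t
    _ = chiSq q p / Real.log 2 := by
        simp only [← sum_div, hchi, sum_add_distrib, sum_sub_distrib, hq1, hp1, sub_self,
          add_zero, chiSq]

end Divergence

lemma mem_segIv {K : ℕ} {o : Equiv.Perm (Fin K)} {a b : ℕ} {k : Fin K} :
    k ∈ segIv o a b ↔ a ≤ (o.symm k : ℕ) ∧ (o.symm k : ℕ) ≤ b := by
  simp only [segIv, mem_image, mem_filter, mem_univ, true_and]
  exact ⟨by rintro ⟨m, hm, rfl⟩; simpa using hm, fun h => ⟨o.symm k, h, o.apply_symm_apply k⟩⟩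

namespace SegColl

variable {K : ℕ} (𝒞 : SegColl K) (o : Equiv.Perm (Fin K))

def junctionSum (f : Finset (Fin K) → ℝ) : ℝ :=
  ∑ i ∈ range 𝒞.L, f (𝒞.seg o i) - ∑ i ∈ range (𝒞.L - 1), f (𝒞.ovl o i)

lemma L_sub_one_add_one : 𝒞.L - 1 + 1 = 𝒞.L := Nat.sub_add_cancel 𝒞.hL

lemma junctionSum_sub (f g : Finset (Fin K) → ℝ) :
    𝒞.junctionSum o (fun X => f X - g X) = 𝒞.junctionSum o f - 𝒞.junctionSum o g := by
  simp only [junctionSum, sum_sub_distrib]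
  ring

lemma junctionSum_crossEnt (q p : (Fin K → Bool) → ℝ) :
    𝒞.junctionSum o (crossEnt q p)
      = -∑ t, q t * 𝒞.junctionSum o (fun X => Real.logb 2 (marg p X t)) := by
  simp only [junctionSum, crossEnt, mul_sub, mul_sum, sum_sub_distrib, sum_neg_distrib]
  rw [sum_comm (s := range 𝒞.L), sum_comm (s := range (𝒞.L - 1))]
  ring

lemma junctionSum_nonneg {f : Finset (Fin K) → ℝ} (hf : ∀ X, 0 ≤ f X) (hmono : Monotone f) :
    0 ≤ 𝒞.junctionSum o f := by
  have hovl : ∀ i ∈ range (𝒞.L - 1), f (𝒞.ovl o i) ≤ f (𝒞.seg o (i + 1)) :=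
    fun i _ => hmono inter_subset_right
  rw [junctionSum, ← 𝒞.L_sub_one_add_one, sum_range_succ', 𝒞.L_sub_one_add_one]
  linarith [sum_le_sum hovl, hf (𝒞.seg o 0)]

lemma segIv_zero_e_zero : segIv o 0 (𝒞.e 0) = 𝒞.seg o 0 := by
  rw [seg, 𝒞.s_first]

lemma segIv_zero_e_last : segIv o 0 (𝒞.e (𝒞.L - 1)) = univ :=
  eq_univ_of_forall fun k => mem_segIv.2 ⟨Nat.zero_le _, 𝒞.e_last ▸ by omega⟩

lemma segIv_zero_e_succ {j : ℕ} (hj : j + 1 < 𝒞.L) :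
    segIv o 0 (𝒞.e (j + 1)) = segIv o 0 (𝒞.e j) ∪ 𝒞.seg o (j + 1) := by
  have := 𝒞.covers j hj
  have := 𝒞.e_mono j hj
  ext k
  simp only [mem_union, seg, mem_segIv]
  omega

lemma segIv_zero_e_inter_seg {j : ℕ} (hj : j + 1 < 𝒞.L) :
    segIv o 0 (𝒞.e j) ∩ 𝒞.seg o (j + 1) = 𝒞.ovl o j := by
  have := 𝒞.s_mono j hj
  have := 𝒞.e_mono j hj
  ext k
  simp only [mem_inter, ovl, seg, mem_segIv]
  omega

/-- Running the submodular inequality along the prefixes `C₁ ∪ ⋯ ∪ Cⱼ`, whose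
intersection with `Cⱼ₊₁` is the overlap `Sⱼ`. -/
lemma le_junctionSum_of_submodular {f : Finset (Fin K) → ℝ}
    (hf : ∀ A B, f (A ∪ B) + f (A ∩ B) ≤ f A + f B) : f univ ≤ 𝒞.junctionSum o f := by
  have hprefix : ∀ j < 𝒞.L, f (segIv o 0 (𝒞.e j))
      ≤ ∑ i ∈ range (j + 1), f (𝒞.seg o i) - ∑ i ∈ range j, f (𝒞.ovl o i) := by
    intro j
    induction j with
    | zero => simp [segIv_zero_e_zero]
    | succ j ih =>
      intro hj
      have h := hf (segIv o 0 (𝒞.e j)) (𝒞.seg o (j + 1))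
      rw [← segIv_zero_e_succ 𝒞 o hj, segIv_zero_e_inter_seg 𝒞 o hj] at h
      rw [sum_range_succ _ (j + 1), sum_range_succ (fun i => f (𝒞.ovl o i)) j]
      linarith [ih (by omega)]
  have h := hprefix (𝒞.L - 1) (Nat.sub_lt 𝒞.hL one_pos)
  rwa [segIv_zero_e_last, 𝒞.L_sub_one_add_one] at h

end SegColl

section Deterministic

variable {K : ℕ} {o o₁ o₂ : Equiv.Perm (Fin K)} {𝒞 𝒞₁ 𝒞₂ : SegColl K}
  {p q : (Fin K → Bool) → ℝ}

lemma memModel.logb_eq_junctionSum (h : memModel o 𝒞 p) (hpos : ∀ t, 0 < p t)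
    (t : Fin K → Bool) :
    Real.logb 2 (p t) = 𝒞.junctionSum o fun X => Real.logb 2 (marg p X t) := by
  have hmarg : ∀ X, marg p X t ≠ 0 := fun X => ((hpos t).trans_le (le_marg h.1.1)).ne'
  have hS := prod_ne_zero_iff.2 fun i (_ : i ∈ range (𝒞.L - 1)) => hmarg (𝒞.ovl o i)
  rw [eq_div_of_mul_eq hS (h.2 t), Real.logb_div (prod_ne_zero_iff.2 fun i _ => hmarg _) hS,
    Real.logb_prod _ _ fun i _ => hmarg _, Real.logb_prod _ _ fun i _ => hmarg _]
  rfl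

lemma memModel.junctionSum_crossEnt (h : memModel o 𝒞 p) (hpos : ∀ t, 0 < p t)
    (q : (Fin K → Bool) → ℝ) : 𝒞.junctionSum o (crossEnt q p) = crossEnt q p univ := by
  simp only [SegColl.junctionSum_crossEnt, ← h.logb_eq_junctionSum hpos, crossEnt, marg_univ]

/-- The divergences of the segment marginals dominate those of the overlaps. -/
lemma memModel.junctionSum_segEntropy_le (h : memModel o 𝒞 p) (hpos : ∀ t, 0 < p t)
    (hq : ∀ t, 0 ≤ q t) (hq1 : ∑ t, q t = 1) :
    𝒞.junctionSum o (segEntropy q) ≤ crossEnt q p univ := by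
  have hKL : 0 ≤ 𝒞.junctionSum o (margKL q p) :=
    𝒞.junctionSum_nonneg o (fun _ => margKL_nonneg hq hq1 h.1.1 h.1.2 fun t _ => hpos t)
      fun _ _ => margKL_mono hq hq1 h.1.1 fun t _ => hpos t
  have hsplit : segEntropy q = fun X => crossEnt q p X - margKL q p X := by
    ext X
    rw [margKL]
    ring
  rw [hsplit, SegColl.junctionSum_sub, h.junctionSum_crossEnt hpos]
  linarith

lemma segEntropy_univ_le_junctionSum (hq : ∀ t, 0 ≤ q t) (hq1 : ∑ t, q t = 1) :
    segEntropy q univ ≤ 𝒞.junctionSum o (segEntropy q) :=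
  𝒞.le_junctionSum_of_submodular o fun _ _ => segEntropy_union_add_inter_le hq hq1

lemma memModel.junctionSum_sub_junctionSum_le_chiSq (h₁ : memModel o₁ 𝒞₁ p)
    (hpos : ∀ t, 0 < p t) (hq : ∀ t, 0 ≤ q t) (hq1 : ∑ t, q t = 1) :
    𝒞₁.junctionSum o₁ (segEntropy q) - 𝒞₂.junctionSum o₂ (segEntropy q)
      ≤ chiSq q p / Real.log 2 := by
  have hKL : crossEnt q p univ - segEntropy q univ ≤ chiSq q p / Real.log 2 :=
    margKL_univ_le_chiSq hq hq1 hpos h₁.1.2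
  linarith [h₁.junctionSum_segEntropy_le hpos hq hq1,
    segEntropy_univ_le_junctionSum (𝒞 := 𝒞₂) (o := o₂) hq hq1]

lemma empDist_nonneg (D : Multiset (Fin K → Bool)) (v : Fin K → Bool) : 0 ≤ empDist D v :=
  div_nonneg (Nat.cast_nonneg _) (Nat.cast_nonneg _)

lemma sum_empDist {D : Multiset (Fin K → Bool)} (hD : D ≠ 0) :
    ∑ v, empDist D v = 1 := by
  simp only [empDist]
  rw [← sum_div, ← Nat.cast_sum, Multiset.sum_count_eq_card fun a _ => mem_univ a,
    div_self (Nat.cast_ne_zero.2 (Multiset.card_pos.2 hD).ne')]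

lemma memModel.collEnt_sub_collEnt_le_chiSq (h₁ : memModel o₁ 𝒞₁ p) (hpos : ∀ t, 0 < p t)
    {D : Multiset (Fin K → Bool)} (hD : D ≠ 0) :
    collEnt D o₁ 𝒞₁ - collEnt D o₂ 𝒞₂ ≤ chiSq (empDist D) p / Real.log 2 :=
  h₁.junctionSum_sub_junctionSum_le_chiSq hpos (empDist_nonneg D) (sum_empDist hD)

end Deterministic

lemma tendsto_measure_le_of_integral_le {Ω : Type*} [MeasurableSpace Ω] {μ : Measure Ω}
    [IsFiniteMeasure μ] {Y : ℕ → Ω → ℝ} {t : ℕ → ℝ} {C : ℝ} (hY : ∀ N ω, 0 ≤ Y N ω)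
    (hint : ∀ N, Integrable (Y N) μ) (hC : ∀ N, ∫ ω, Y N ω ∂μ ≤ C)
    (ht : Tendsto t atTop atTop) :
    Tendsto (fun N => μ {ω | t N ≤ Y N ω}) atTop (nhds 0) := by
  have hbound : ∀ᶠ N in atTop, μ {ω | t N ≤ Y N ω} ≤ ENNReal.ofReal (C / t N) := by
    filter_upwards [ht.eventually_gt_atTop 0] with N htN
    rw [ENNReal.le_ofReal_iff_toReal_le (measure_ne_top μ _)
      (div_nonneg ((integral_nonneg (hY N)).trans (hC N)) htN.le), le_div_iff₀ htN, mul_comm]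
    exact (mul_meas_ge_le_integral_of_nonneg (ae_of_all _ (hY N)) (hint N) (t N)).trans (hC N)
  have hlim : Tendsto (fun N => ENNReal.ofReal (C / t N)) atTop (nhds 0) := by
    simpa using ENNReal.tendsto_ofReal (tendsto_const_nhds.div_atTop ht)
  exact tendsto_of_tendsto_of_tendsto_of_le_of_le' tendsto_const_nhds hlim
    (Eventually.of_forall fun _ => zero_le) hbound
section Sampling

variable {K : ℕ} {Ω : Type*}

def sampleIndicator (X : ℕ → Ω → (Fin K → Bool)) (v : Fin K → Bool) (n : ℕ) (ω : Ω) : ℝ :=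
  if X n ω = v then 1 else 0

variable {X : ℕ → Ω → (Fin K → Bool)}

lemma sampleIndicator_mem_Icc (v : Fin K → Bool) (n : ℕ) (ω : Ω) :
    sampleIndicator X v n ω ∈ Set.Icc 0 1 := by
  unfold sampleIndicator
  split_ifs <;> simp

lemma card_sampleData (N : ℕ) (ω : Ω) : Multiset.card (sampleData X N ω) = N := by
  simp [sampleData]

lemma empDist_sampleData (N : ℕ) (ω : Ω) (v : Fin K → Bool) :
    empDist (sampleData X N ω) v = (∑ n ∈ range N, sampleIndicator X v n ω) / N := by
  simp only [empDist, card_sampleData]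
  simp only [sampleIndicator, sum_boole, sampleData, Multiset.count_map, eq_comm]
  rfl

section Probability

open ProbabilityTheory

variable [MeasurableSpace Ω] {μ : Measure Ω} {p : (Fin K → Bool) → ℝ}

lemma measurable_sampleIndicator (hmeas : ∀ n, Measurable (X n)) (v : Fin K → Bool) (n : ℕ) :
    Measurable (sampleIndicator X v n) :=
  Measurable.ite (hmeas n (measurableSet_singleton v)) measurable_const measurable_const

lemma memLp_sampleIndicator [IsFiniteMeasure μ] (hmeas : ∀ n, Measurable (X n))
    (v : Fin K → Bool) (n : ℕ) : MemLp (sampleIndicator X v n) 2 μ :=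
  MemLp.of_bound (measurable_sampleIndicator hmeas v n).aestronglyMeasurable 1 <|
    ae_of_all _ fun ω => by
      obtain ⟨h0, h1⟩ := sampleIndicator_mem_Icc (X := X) v n ω
      rwa [Real.norm_of_nonneg h0]

lemma integral_sampleIndicator (hmeas : ∀ n, Measurable (X n))
    (hlaw : ∀ n v, μ {ω | X n ω = v} = ENNReal.ofReal (p v)) {v : Fin K → Bool} (hp : 0 ≤ p v)
    (n : ℕ) : ∫ ω, sampleIndicator X v n ω ∂μ = p v := by
  have h : sampleIndicator X v n = {ω | X n ω = v}.indicator 1 := by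
    ext ω
    simp [sampleIndicator, Set.indicator_apply]
  have hs : MeasurableSet {ω | X n ω = v} := hmeas n (measurableSet_singleton v)
  rw [h, integral_indicator_one hs, measureReal_def, hlaw, ENNReal.toReal_ofReal hp]

lemma variance_sum_sampleIndicator_le [IsProbabilityMeasure μ] (hmeas : ∀ n, Measurable (X n))
    (hindep : iIndepFun X μ)
    (hlaw : ∀ n v, μ {ω | X n ω = v} = ENNReal.ofReal (p v)) {v : Fin K → Bool} (hp : 0 ≤ p v)
    (N : ℕ) : Var[∑ n ∈ range N, sampleIndicator X v n; μ] ≤ N * p v := by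
  rw [IndepFun.variance_sum (fun n _ => memLp_sampleIndicator hmeas v n)
    fun m _ n _ hmn => (hindep.indepFun hmn).comp
      (measurable_of_countable fun u => if u = v then (1 : ℝ) else 0)
      (measurable_of_countable fun u => if u = v then (1 : ℝ) else 0)]
  have hvar : ∀ n, Var[sampleIndicator X v n; μ] ≤ p v := by
    intro n
    have h := variance_le_sub_mul_sub (μ := μ) (ae_of_all _ (sampleIndicator_mem_Icc v n))
      (measurable_sampleIndicator hmeas v n).aemeasurable
    rw [integral_sampleIndicator hmeas hlaw hp] at h
    nlinarith
  simpa using sum_le_sum fun n (_ : n ∈ range N) => hvar n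

lemma mul_integral_sq_empDist_sub_le [IsProbabilityMeasure μ] (hmeas : ∀ n, Measurable (X n))
    (hindep : iIndepFun X μ)
    (hlaw : ∀ n v, μ {ω | X n ω = v} = ENNReal.ofReal (p v)) {v : Fin K → Bool} (hp : 0 ≤ p v)
    (N : ℕ) : N * ∫ ω, (empDist (sampleData X N ω) v - p v) ^ 2 ∂μ ≤ p v := by
  rcases N.eq_zero_or_pos with rfl | hN
  · simpa using hp
  set S := ∑ n ∈ range N, sampleIndicator X v n
  have hY : (fun ω => empDist (sampleData X N ω) v) = fun ω => (N : ℝ)⁻¹ * S ω := by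
    ext ω
    simp only [S, Finset.sum_apply]
    rw [empDist_sampleData, div_eq_inv_mul]
  have hmean : ∫ ω, empDist (sampleData X N ω) v ∂μ = p v := by
    rw [hY, integral_const_mul]
    simp only [S, Finset.sum_apply]
    rw [integral_finsetSum _ fun n _ => (memLp_sampleIndicator hmeas v n).integrable one_le_two]
    simp only [integral_sampleIndicator hmeas hlaw hp, sum_const, card_range, nsmul_eq_mul]
    field_simp
  have hSm : AEMeasurable S μ :=
    Finset.aemeasurable_sum _ fun n _ => (measurable_sampleIndicator hmeas v n).aemeasurable
  have hvar : ∫ ω, (empDist (sampleData X N ω) v - p v) ^ 2 ∂μ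
      = (N : ℝ)⁻¹ ^ 2 * Var[S; μ] := by
    rw [← variance_const_mul, ← hY, ← hmean, variance_eq_integral (hY ▸ hSm.const_mul _)]
  have hS := variance_sum_sampleIndicator_le hmeas hindep hlaw hp N (μ := μ)
  have hN' : (0 : ℝ) < N := by exact_mod_cast hN
  rw [hvar]
  calc (N : ℝ) * ((N : ℝ)⁻¹ ^ 2 * Var[S; μ]) ≤ N * ((N : ℝ)⁻¹ ^ 2 * (N * p v)) := by gcongr
    _ = p v := by field_simp

lemma memLp_empDist_sampleData [IsFiniteMeasure μ] (hmeas : ∀ n, Measurable (X n)) (N : ℕ)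
    (v : Fin K → Bool) : MemLp (fun ω => empDist (sampleData X N ω) v) 2 μ := by
  simp_rw [empDist_sampleData, div_eq_inv_mul]
  exact (memLp_finsetSum _ fun n _ => memLp_sampleIndicator hmeas v n).const_mul _

lemma integrable_chiSq_empDist [IsFiniteMeasure μ] (hmeas : ∀ n, Measurable (X n)) (N : ℕ) :
    Integrable (fun ω => chiSq (empDist (sampleData X N ω)) p) μ :=
  integrable_finsetSum _ fun v _ =>
    ((memLp_empDist_sampleData hmeas N v).sub (memLp_const (p v))).integrable_sq.div_const _

lemma integral_mul_chiSq_empDist_le [IsProbabilityMeasure μ] (hmeas : ∀ n, Measurable (X n))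
    (hindep : iIndepFun X μ) (hlaw : ∀ n v, μ {ω | X n ω = v} = ENNReal.ofReal (p v))
    (hpos : ∀ v, 0 < p v) (N : ℕ) :
    ∫ ω, N * chiSq (empDist (sampleData X N ω)) p ∂μ ≤ Fintype.card (Fin K → Bool) := by
  have hint : ∀ v, Integrable (fun ω => (empDist (sampleData X N ω) v - p v) ^ 2) μ :=
    fun v => ((memLp_empDist_sampleData hmeas N v).sub (memLp_const (p v))).integrable_sq
  simp only [chiSq]
  rw [integral_const_mul, integral_finsetSum _ fun v _ => (hint v).div_const _, mul_sum]
  calc ∑ v, (N : ℝ) * ∫ ω, (empDist (sampleData X N ω) v - p v) ^ 2 / p v ∂μ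
      = ∑ v, (N * ∫ ω, (empDist (sampleData X N ω) v - p v) ^ 2 ∂μ) / p v := by
        simp only [integral_div, mul_div_assoc]
    _ ≤ ∑ _v : Fin K → Bool, (1 : ℝ) := sum_le_sum fun v _ =>
        (div_le_one (hpos v)).2 (mul_integral_sq_empDist_sub_le hmeas hindep hlaw (hpos v).le N)
    _ = Fintype.card (Fin K → Bool) := by simp

end Probability

end Sampling

theorem entropy_difference_bounded_in_probability_general {K : ℕ}
    (p : (Fin K → Bool) → ℝ) (hpos : ∀ t, 0 < p t)
    (o₁ o₂ : Equiv.Perm (Fin K)) (𝒞₁ 𝒞₂ : SegColl K)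
    (h₁ : memModel o₁ 𝒞₁ p)
    {Ω : Type*} [MeasurableSpace Ω] (ℙ : Measure Ω) [IsProbabilityMeasure ℙ]
    (X : ℕ → Ω → (Fin K → Bool)) (hmeas : ∀ n, Measurable (X n))
    (hindep : ProbabilityTheory.iIndepFun X ℙ)
    (hlaw : ∀ n v, ℙ {ω | X n ω = v} = ENNReal.ofReal (p v))
    (t : ℕ → ℝ) (ht : Tendsto t atTop atTop) :
    Tendsto
      (fun N => ℙ {ω | t N ≤
          (N : ℝ) * collEnt (sampleData X N ω) o₁ 𝒞₁
            - (N : ℝ) * collEnt (sampleData X N ω) o₂ 𝒞₂})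
      atTop (nhds 0) := by
  set Y : ℕ → Ω → ℝ := fun N ω => N * chiSq (empDist (sampleData X N ω)) p / Real.log 2
  have hZY : ∀ (N : ℕ) ω, (N : ℝ) * collEnt (sampleData X N ω) o₁ 𝒞₁
      - (N : ℝ) * collEnt (sampleData X N ω) o₂ 𝒞₂ ≤ Y N ω := by
    intro N ω
    rcases N.eq_zero_or_pos with rfl | hN
    · simp [Y]
    have hD : sampleData X N ω ≠ 0 := Multiset.card_pos.1 (by rwa [card_sampleData])
    simp only [Y, ← mul_sub, mul_div_assoc]
    exact mul_le_mul_of_nonneg_left (h₁.collEnt_sub_collEnt_le_chiSq hpos hD) N.cast_nonneg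
  have hY : Tendsto (fun N => ℙ {ω | t N ≤ Y N ω}) atTop (nhds 0) :=
    tendsto_measure_le_of_integral_le
      (fun N ω => div_nonneg (mul_nonneg N.cast_nonneg (chiSq_nonneg _ fun v => (hpos v).le))
        (Real.log_nonneg one_le_two))
      (fun N => ((integrable_chiSq_empDist hmeas N).const_mul _).div_const _)
      (fun N => by
        rw [integral_div]
        exact div_le_div_of_nonneg_right
          (integral_mul_chiSq_empDist_le hmeas hindep hlaw hpos N) (Real.log_nonneg one_le_two))
      ht
  exact tendsto_of_tendsto_of_tendsto_of_le_of_le tendsto_const_nhds hY (fun _ => zero_le)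
    fun N => measure_mono fun ω hω => le_trans hω (hZY N ω)

/-- For i.i.d. data from `p` and collections `𝒞₁ ∈ Seg(o₁)`,
`𝒞₂ ∈ Seg(o₂)` whose models contain `p`, the difference of entropy terms
`Z_N = N (∑_{C∈𝒞₁} H(C;D_N) - ∑ H(S;D_N)) - N (∑_{C∈𝒞₂} H(C;D_N) - ∑ H(S;D_N))`
satisfies `P(Z_N ≥ t_N) → 0` whenever `t_N → ∞`. -/
theorem entropy_difference_bounded_in_probability {K : ℕ}
    (p : (Fin K → Bool) → ℝ) (hdist : IsDist p) (hpos : ∀ t, 0 < p t)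
    (o₁ o₂ : Equiv.Perm (Fin K)) (𝒞₁ 𝒞₂ : SegColl K)
    (h₁ : memModel o₁ 𝒞₁ p) (h₂ : memModel o₂ 𝒞₂ p)
    {Ω : Type*} [MeasurableSpace Ω] (ℙ : Measure Ω) [IsProbabilityMeasure ℙ]
    (X : ℕ → Ω → (Fin K → Bool)) (hmeas : ∀ n, Measurable (X n))
    (hindep : ProbabilityTheory.iIndepFun X ℙ)
    (hlaw : ∀ n v, ℙ {ω | X n ω = v} = ENNReal.ofReal (p v))
    (t : ℕ → ℝ) (ht : Tendsto t atTop atTop) :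
    Tendsto
      (fun N => ℙ {ω | t N ≤
          (N : ℝ) * collEnt (sampleData X N ω) o₁ 𝒞₁
            - (N : ℝ) * collEnt (sampleData X N ω) o₂ 𝒞₂})
      atTop (nhds 0) :=
  entropy_difference_bounded_in_probability_general p hpos o₁ o₂ 𝒞₁ 𝒞₂ h₁ ℙ X hmeas hindep hlaw t ht
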